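/- arXiv:1408.0691 — 2 statements merged into one kernel-verified Lean document; each statement's English description precedes it below -/
import Mathlib

section
/- Let 𝒜 be a skeletally small additive category closed under direct summands that is precovering in an abelian category ℳ, and let 0 → A′ →^{α′} A →^{α} A″ be an exact sequence in ℳ with A, A′, A″ in 𝒜. Let G be the finitely presented right 𝒜-module defined by the exact sequence 𝒜(−, A) →^{𝒜(−,α)} 𝒜(−, A″) → G → 0. Then for every finitely presented right 𝒜-module H there is an isomorphism of abelian groups Ext²(G, H) ≅ Coker H(α′), where Ext² is computed in the abelian category of finitely presented right 𝒜-modules. -/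
/-!
Statement 13: Let `𝒜` be an additive subcategory, closed under direct summands, of an
abelian category `ℳ` (encoded by a predicate `P` on the objects of `ℳ`), and assume `𝒜` is
precovering in `ℳ`.  Let `0 → A′ → A → A″` be an exact sequence in `ℳ` with `A′, A, A″` in
`𝒜`, and let `G` be the finitely presented right `𝒜`-module defined by the exact sequence
`𝒜(−, A) → 𝒜(−, A″) → G → 0`.  Then for every finitely presented right `𝒜`-module `H`
there is an isomorphism of abelian groups `Ext²(G, H) ≅ Coker H(α′)`, where `Ext²` is
computed in the abelian category of finitely presented right `𝒜`-modules — equivalently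
(and this is how it is stated here), for every projective resolution of `G` by representable
functors, the second cohomology of the complex obtained by applying `Hom(−, H)` — which by
Yoneda's lemma is the complex `i ↦ H(Q_i)` — is isomorphic to `Coker H(α′)`.
-/

open CategoryTheory CategoryTheory.Limits Opposite

noncomputable section


/-- A full subcategory of a preadditive category is preadditive. -/
instance fullSubcategoryPreadditive {ℳ : Type u₁} [Category.{v₁} ℳ] [Preadditive ℳ]
    (P : ℳ → Prop) : Preadditive (ObjectProperty.FullSubcategory P) where
  homGroup X Y := InducedCategory.homEquiv.addCommGroup
  add_comp _ _ _ _ _ _ := by ext; apply Preadditive.add_comp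
  comp_add _ _ _ _ _ _ := by ext; apply Preadditive.comp_add

/-- Exactness of a composable pair in an abelian category. -/
def ExactAt {A : Type*} [Category A] [Abelian A] {X Y Z : A}
    (f : X ⟶ Y) (g : Y ⟶ Z) : Prop :=
  ∃ w : f ≫ g = 0, (ShortComplex.mk f g w).Exact

variable (𝒞 : Type u₁) [Category.{v₁} 𝒞] [Preadditive 𝒞]

/-- A right `𝒞`-module: an additive contravariant functor from `𝒞` to abelian groups. -/
abbrev RightMod := 𝒞ᵒᵖ ⥤ AddCommGrpCat.{v₁}

/-- A left `𝒞`-module: an additive covariant functor from `𝒞` to abelian groups. -/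
abbrev LeftMod := 𝒞 ⥤ AddCommGrpCat.{v₁}

variable {𝒞} in
/-- A right `𝒞`-module is finitely presented if it is the cokernel of a morphism of
representable functors `𝒞(−, B) → 𝒞(−, A)`. -/
def IsFpRight (F : RightMod 𝒞) : Prop :=
  ∃ (A B : 𝒞) (φ : B ⟶ A) (π : preadditiveYoneda.obj A ⟶ F),
    Epi π ∧ ExactAt (preadditiveYoneda.map φ) π

variable {𝒞} in
/-- A left `𝒞`-module is finitely presented if it is the cokernel of a morphism of
representable functors `𝒞(A, −) → 𝒞(B, −)`. -/
def IsFpLeft (F : LeftMod 𝒞) : Prop :=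
  ∃ (A B : 𝒞) (φ : A ⟶ B) (π : preadditiveCoyoneda.obj (Opposite.op A) ⟶ F),
    Epi π ∧ ExactAt (preadditiveCoyoneda.map φ.op) π

variable {𝒞} in
/-- The right `𝒞`-module `F` has projective dimension `≤ n`: there is an exact sequence
`0 → 𝒞(−, X_n) → ⋯ → 𝒞(−, X_0) → F → 0` of right `𝒞`-modules (the projective objects
among finitely presented right `𝒞`-modules being precisely the direct summands of
representables).  The resolution is encoded by an `ℕ`-indexed family which vanishes in
degrees `> n`. -/
def rightPdLE (F : RightMod 𝒞) (n : ℕ) : Prop :=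
  ∃ (X : ℕ → 𝒞) (q : ∀ i, X (i + 1) ⟶ X i) (ε : preadditiveYoneda.obj (X 0) ⟶ F),
    Epi ε ∧ ExactAt (preadditiveYoneda.map (q 0)) ε ∧
      (∀ i, ExactAt (preadditiveYoneda.map (q (i + 1))) (preadditiveYoneda.map (q i))) ∧
      (∀ i, n < i → IsZero (X i))

variable {𝒞} in
/-- The left `𝒞`-module `F` has projective dimension `≤ n`. -/
def leftPdLE (F : LeftMod 𝒞) (n : ℕ) : Prop :=
  ∃ (X : ℕ → 𝒞) (q : ∀ i, X i ⟶ X (i + 1)) (ε : preadditiveCoyoneda.obj (Opposite.op (X 0)) ⟶ F),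
    Epi ε ∧ ExactAt (preadditiveCoyoneda.map (q 0).op) ε ∧
      (∀ i, ExactAt (preadditiveCoyoneda.map (q (i + 1)).op) (preadditiveCoyoneda.map (q i).op)) ∧
      (∀ i, n < i → IsZero (X i))

/-- The right global dimension of the "ring with several objects" `𝒞`, as an element
of `ℕ∞`: the supremum of the projective dimensions of all finitely presented right
`𝒞`-modules. -/
noncomputable def rightGldim : ℕ∞ :=
  sInf {c : ℕ∞ | ∃ n : ℕ, c = (n : ℕ∞) ∧ ∀ F : RightMod 𝒞, IsFpRight F → rightPdLE F n}

/-- The left global dimension of the "ring with several objects" `𝒞`, as an element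
of `ℕ∞`: the supremum of the projective dimensions of all finitely presented left
`𝒞`-modules. -/
noncomputable def leftGldim : ℕ∞ :=
  sInf {c : ℕ∞ | ∃ n : ℕ, c = (n : ℕ∞) ∧ ∀ F : LeftMod 𝒞, IsFpLeft F → leftPdLE F n}

/-- A projective resolution `0 → P_n → ⋯ → P_0 → M → 0` of length `≤ n` of a module over a
ring, witnessing projective dimension `≤ n`; the resolution is encoded by an `ℕ`-indexed
family which vanishes in degrees `> n`. -/
def ModulePdLE (A : Type u₂) [Ring A] (M : ModuleCat.{u₂} A) (n : ℕ) : Prop :=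
  ∃ (P : ℕ → ModuleCat.{u₂} A) (g : ∀ i, P (i + 1) ⟶ P i) (ε : P 0 ⟶ M),
    (∀ i, Module.Projective A (P i)) ∧ Epi ε ∧ ExactAt (g 0) ε ∧
      (∀ i, ExactAt (g (i + 1)) (g i)) ∧ (∀ i, n < i → Subsingleton (P i))

/-- The global dimension of a ring `A`, as an element of `ℕ∞`: the supremum of the
projective dimensions of all (left) `A`-modules. -/
noncomputable def ringGlobalDim (A : Type u₂) [Ring A] : ℕ∞ :=
  sInf {c : ℕ∞ | ∃ n : ℕ, c = (n : ℕ∞) ∧ ∀ M : ModuleCat.{u₂} A, ModulePdLE A M n}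


/-- `𝒜` (the full subcategory of objects satisfying `P`) is precovering in `ℳ`. -/
def IsPrecovering {ℳ : Type u₁} [Category.{v₁} ℳ] (P : ℳ → Prop) : Prop :=
  ∀ M : ℳ, ∃ (A : ℳ) (_ : P A) (π : A ⟶ M),
    ∀ (A' : ℳ), P A' → ∀ π' : A' ⟶ M, ∃ θ : A' ⟶ A, θ ≫ π = π'

/-!
Any two resolutions of `G` by representable functors are homotopy equivalent: by Yoneda,
representables are projective and exactness of a complex of representables is a lifting property
in `𝒜`, so the usual comparison maps and homotopies can be built degree by degree inside `𝒜`.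
Hence the cohomology of `H` applied to a resolution does not depend on the resolution. Since
`𝒜(−, −)` is left exact, `0 → 𝒜(−, A′) → 𝒜(−, A) → 𝒜(−, A″) → G → 0` is such a resolution
(padded by a zero object of `𝒜`), and for it the complex `H(A″) → H(A) → H(A′) → 0` has
cohomology `Coker H(α′)` in degree two.
-/

universe v u

section Yoneda

variable {𝒟 : Type u} [Category.{v} 𝒟] [Preadditive 𝒟] {G : 𝒟ᵒᵖ ⥤ AddCommGrpCat.{v}}

instance preadditiveYoneda_additive :
    (preadditiveYoneda : 𝒟 ⥤ 𝒟ᵒᵖ ⥤ AddCommGrpCat.{v}).Additive where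
  map_add := by
    intros
    ext
    exact Preadditive.comp_add _ _ _ _ _ _

lemma preadditiveYoneda_app_eq {Y : 𝒟} (σ : preadditiveYoneda.obj Y ⟶ G) {Z : 𝒟} (f : Z ⟶ Y) :
    σ.app (op Z) f = G.map f.op (σ.app (op Y) (𝟙 Y)) := by
  have h : σ.app (op Z) ((preadditiveYoneda.obj Y).map f.op (𝟙 Y)) =
      G.map f.op (σ.app (op Y) (𝟙 Y)) :=
    ConcreteCategory.congr_hom (σ.naturality f.op) (𝟙 Y)
  rwa [show (preadditiveYoneda.obj Y).map f.op (𝟙 Y) = f from Category.comp_id f] at h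

lemma preadditiveYoneda_hom_ext {Y : 𝒟} {σ τ : preadditiveYoneda.obj Y ⟶ G}
    (h : σ.app (op Y) (𝟙 Y) = τ.app (op Y) (𝟙 Y)) : σ = τ := by
  ext ⟨Z⟩ (f : Z ⟶ Y)
  rw [preadditiveYoneda_app_eq σ, preadditiveYoneda_app_eq τ, h]

lemma preadditiveYoneda_map_comp_app_id {X Y : 𝒟} (f : Y ⟶ X)
    (σ : preadditiveYoneda.obj X ⟶ G) :
    (preadditiveYoneda.map f ≫ σ).app (op Y) (𝟙 Y) = σ.app (op Y) f :=
  congrArg (σ.app (op Y)) (Category.id_comp f)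

lemma exists_preadditiveYoneda_map_comp_eq {X Y : 𝒟} (π : preadditiveYoneda.obj X ⟶ G) [Epi π]
    (σ : preadditiveYoneda.obj Y ⟶ G) : ∃ f : Y ⟶ X, preadditiveYoneda.map f ≫ π = σ := by
  have hπ : Function.Surjective (π.app (op Y)) := by
    rw [← AddCommGrpCat.epi_iff_surjective]
    exact (NatTrans.epi_iff_epi_app π).1 inferInstance (op Y)
  obtain ⟨f, hf⟩ := hπ (σ.app (op Y) (𝟙 Y))
  exact ⟨f, preadditiveYoneda_hom_ext ((preadditiveYoneda_map_comp_app_id f π).trans hf)⟩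

lemma exists_comp_eq_of_exactAt {X Y Z : 𝒟} {φ : Y ⟶ Z} {ψ : preadditiveYoneda.obj Z ⟶ G}
    (h : ExactAt (preadditiveYoneda.map φ) ψ) (f : X ⟶ Z)
    (hf : preadditiveYoneda.map f ≫ ψ = 0) : ∃ g : X ⟶ Y, g ≫ φ = f := by
  obtain ⟨_, hexact⟩ := h
  have := hexact.map ((evaluation 𝒟ᵒᵖ AddCommGrpCat.{v}).obj (op X))
  rw [ShortComplex.ab_exact_iff] at this
  exact this f ((preadditiveYoneda_map_comp_app_id f ψ).symm.trans (by rw [hf]; rfl))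

end Yoneda

lemma CategoryTheory.Functor.exists_comp_eq_of_exactAt_map {𝒟 ℳ : Type*} [Category 𝒟]
    [HasZeroMorphisms 𝒟] [Category ℳ] [Abelian ℳ] (F : 𝒟 ⥤ ℳ) [F.Full] [F.Faithful]
    [F.PreservesZeroMorphisms] {X Y Z : 𝒟} {f : X ⟶ Y} {g : Y ⟶ Z} [Mono (F.map f)]
    (h : ExactAt (F.map f) (F.map g)) {W : 𝒟} (u : W ⟶ Y) (hu : u ≫ g = 0) :
    ∃ v : W ⟶ X, v ≫ f = u := by
  obtain ⟨_, hexact⟩ := h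
  obtain ⟨l, hl⟩ := hexact.lift' (F.map u) (by rw [← F.map_comp, hu, F.map_zero])
  exact ⟨F.preimage l, F.map_injective (by rw [F.map_comp, F.map_preimage]; exact hl)⟩

section Complexes

variable {𝒟 𝒞 : Type*} [Category 𝒟] [Preadditive 𝒟] [Category 𝒞] [Abelian 𝒞]

lemma ChainComplex.of_d_add_one {X : ℕ → 𝒟} (d : ∀ i, X (i + 1) ⟶ X i)
    (sq : ∀ i, d (i + 1) ≫ d i = 0) (i : ℕ) : (ChainComplex.of X d sq).d (i + 1) i = d i :=
  ChainComplex.of_d X d i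

def HomotopyEquiv.op {ι : Type*} {c : ComplexShape ι} {K L : HomologicalComplex 𝒟 c}
    (e : HomotopyEquiv K L) :
    HomotopyEquiv ((HomologicalComplex.opFunctor 𝒟 c).obj (op L))
      ((HomologicalComplex.opFunctor 𝒟 c).obj (op K)) where
  hom := (HomologicalComplex.opFunctor 𝒟 c).map e.hom.op
  inv := (HomologicalComplex.opFunctor 𝒟 c).map e.inv.op
  homotopyHomInvId := (Homotopy.ofEq (by rw [← Functor.map_comp, ← op_comp])).trans
    (e.homotopyInvHomId.op.trans (Homotopy.ofEq (by rw [op_id, CategoryTheory.Functor.map_id])))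
  homotopyInvHomId := (Homotopy.ofEq (by rw [← Functor.map_comp, ← op_comp])).trans
    (e.homotopyHomInvId.op.trans (Homotopy.ofEq (by rw [op_id, CategoryTheory.Functor.map_id])))

lemma CategoryTheory.Functor.map_op_comp_map_op_eq_zero (F : 𝒟ᵒᵖ ⥤ 𝒞)
    [F.PreservesZeroMorphisms] {X : ℕ → 𝒟} {d : ∀ n, X (n + 1) ⟶ X n}
    (sq : ∀ n, d (n + 1) ≫ d n = 0) (n : ℕ) : F.map (d n).op ≫ F.map (d (n + 1)).op = 0 := by
  rw [← F.map_comp, ← op_comp, sq, op_zero, F.map_zero]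

def CochainComplex.ofHomologyIso (X : ℕ → 𝒞) (d : ∀ n, X n ⟶ X (n + 1))
    (w : ∀ n, d n ≫ d (n + 1) = 0) (n : ℕ) :
    (CochainComplex.of X d w).homology (n + 1) ≅
      (ShortComplex.mk (d n) (d (n + 1)) (w n)).homology :=
  HomologicalComplex.homologyIsoSc' _ n (n + 1) (n + 2) (ComplexShape.prev_eq' _ rfl)
      (ComplexShape.next_eq' _ rfl) ≪≫
    ShortComplex.homologyMapIso (ShortComplex.isoMk
      (S₁ := (CochainComplex.of X d w).sc' n (n + 1) (n + 2))
      (S₂ := ShortComplex.mk (d n) (d (n + 1)) (w n)) (Iso.refl _) (Iso.refl _) (Iso.refl _)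
      (by erw [Category.id_comp, Category.comp_id]; exact (CochainComplex.of_d X d n).symm)
      (by erw [Category.id_comp, Category.comp_id]; exact (CochainComplex.of_d X d (n + 1)).symm))

def ChainComplex.opMapHomologyIso (F : 𝒟ᵒᵖ ⥤ 𝒞) [F.PreservesZeroMorphisms] (X : ℕ → 𝒟)
    (d : ∀ n, X (n + 1) ⟶ X n) (sq : ∀ n, d (n + 1) ≫ d n = 0) (n : ℕ) :
    ((F.mapHomologicalComplex _).obj (ChainComplex.of X d sq).op).homology (n + 1) ≅
      (ShortComplex.mk _ _ (F.map_op_comp_map_op_eq_zero sq n)).homology :=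
  HomologicalComplex.homologyIsoSc' _ n (n + 1) (n + 2) (ComplexShape.prev_eq' _ rfl)
      (ComplexShape.next_eq' _ rfl) ≪≫
    ShortComplex.homologyMapIso (ShortComplex.isoMk
      (S₁ := ((F.mapHomologicalComplex _).obj (ChainComplex.of X d sq).op).sc' n (n + 1) (n + 2))
      (S₂ := ShortComplex.mk _ _ (F.map_op_comp_map_op_eq_zero sq n))
      (Iso.refl _) (Iso.refl _) (Iso.refl _)
      (by erw [Category.id_comp, Category.comp_id]
          exact congrArg (fun f : _ ⟶ _ => F.map f.op) (ChainComplex.of_d X d n).symm)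
      (by erw [Category.id_comp, Category.comp_id]
          exact congrArg (fun f : _ ⟶ _ => F.map f.op) (ChainComplex.of_d X d (n + 1)).symm))

end Complexes

def ShortComplex.abHomologyIsoQuotientOfIsZero (S : ShortComplex AddCommGrpCat.{v})
    (hS : IsZero S.X₃) : S.homology ≅ AddCommGrpCat.of (S.X₂ ⧸ S.f.hom.range) :=
  (ShortComplex.LeftHomologyData.ofIsColimitCokernelCofork S (hS.eq_of_tgt _ _)
    (AddCommGrpCat.cokernelCocone _) (AddCommGrpCat.cokernelIsColimit _)).homologyIso

section YonedaResolution

variable {𝒟 : Type u} [Category.{v} 𝒟] [Preadditive 𝒟] {G : 𝒟ᵒᵖ ⥤ AddCommGrpCat.{v}}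

/-- A resolution `⋯ → 𝒟(−, X₁) → 𝒟(−, X₀) → G → 0` by representables. By Yoneda, its exactness
at `𝒟(−, Xᵢ)` amounts to the lifting property of `Xᵢ₊₁ → Xᵢ` recorded here. -/
structure YonedaResolution (G : 𝒟ᵒᵖ ⥤ AddCommGrpCat.{v}) where
  complex : ChainComplex 𝒟 ℕ
  π : preadditiveYoneda.obj (complex.X 0) ⟶ G
  [epi_π : Epi π]
  d_comp_π : preadditiveYoneda.map (complex.d 1 0) ≫ π = 0
  exists_lift_of_π {Y : 𝒟} (f : Y ⟶ complex.X 0) :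
    preadditiveYoneda.map f ≫ π = 0 → ∃ g : Y ⟶ complex.X 1, g ≫ complex.d 1 0 = f
  exists_lift_of_d (i : ℕ) {Y : 𝒟} (f : Y ⟶ complex.X (i + 1)) :
    f ≫ complex.d (i + 1) i = 0 →
      ∃ g : Y ⟶ complex.X (i + 2), g ≫ complex.d (i + 2) (i + 1) = f

namespace YonedaResolution

attribute [instance] epi_π

def mk' (X : ℕ → 𝒟) (d : ∀ i, X (i + 1) ⟶ X i) (sq : ∀ i, d (i + 1) ≫ d i = 0)
    (π : preadditiveYoneda.obj (X 0) ⟶ G) [Epi π] (hπ : ExactAt (preadditiveYoneda.map (d 0)) π)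
    (hd : ∀ (i : ℕ) {Y : 𝒟} (f : Y ⟶ X (i + 1)), f ≫ d i = 0 → ∃ g, g ≫ d (i + 1) = f) :
    YonedaResolution G where
  complex := ChainComplex.of X d sq
  π := π
  d_comp_π := by rw [ChainComplex.of_d_add_one]; exact hπ.1
  exists_lift_of_π f hf := by
    rw [ChainComplex.of_d_add_one]
    exact exists_comp_eq_of_exactAt hπ f hf
  exists_lift_of_d i _ f hf := by
    rw [ChainComplex.of_d_add_one] at hf ⊢
    exact hd i f hf

def ofExactAt (X : ℕ → 𝒟) (d : ∀ i, X (i + 1) ⟶ X i) (sq : ∀ i, d (i + 1) ≫ d i = 0)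
    (π : preadditiveYoneda.obj (X 0) ⟶ G) [Epi π] (hπ : ExactAt (preadditiveYoneda.map (d 0)) π)
    (hd : ∀ i, ExactAt (preadditiveYoneda.map (d (i + 1))) (preadditiveYoneda.map (d i))) :
    YonedaResolution G :=
  mk' X d sq π hπ fun i _ f hf =>
    exists_comp_eq_of_exactAt (hd i) f (by rw [← Functor.map_comp, hf, Functor.map_zero])

/-- The resolution `0 → 𝒟(−, A′) → 𝒟(−, A) → 𝒟(−, A″) → G → 0`, continued by the zero
object `Z` in degrees `≥ 3`. -/
def ofKernel {Z A' A A'' : 𝒟} (hZ : IsZero Z) (α' : A' ⟶ A) (α : A ⟶ A'') [Mono α']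
    (w : α' ≫ α = 0) (hα' : ∀ {Y : 𝒟} (f : Y ⟶ A), f ≫ α = 0 → ∃ g, g ≫ α' = f)
    (π : preadditiveYoneda.obj A'' ⟶ G) [Epi π] (hπ : ExactAt (preadditiveYoneda.map α) π) :
    YonedaResolution G :=
  mk' (fun | 0 => A'' | 1 => A | 2 => A' | _ + 3 => Z) (fun | 0 => α | 1 => α' | _ + 2 => 0)
    (fun | 0 => w | 1 => zero_comp | _ + 2 => zero_comp) π hπ <| by
      rintro (_ | _ | i) Y f hf
      · exact hα' f hf
      · exact ⟨0, by rw [zero_comp, ← cancel_mono α', hf, zero_comp]⟩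
      · exact ⟨0, hZ.eq_of_tgt _ _⟩

variable (P R : YonedaResolution G)

def lift : P.complex ⟶ R.complex :=
  have f₀ := exists_preadditiveYoneda_map_comp_eq R.π P.π
  have f₁ := R.exists_lift_of_π (P.complex.d 1 0 ≫ f₀.choose) (by
    rw [Functor.map_comp, Category.assoc, f₀.choose_spec, P.d_comp_π])
  ChainComplex.mkHom _ _ f₀.choose f₁.choose f₁.choose_spec fun n ⟨_, f', hf'⟩ =>
    have f'' := R.exists_lift_of_d n (P.complex.d (n + 2) (n + 1) ≫ f') (by
      rw [Category.assoc, hf', ← Category.assoc, HomologicalComplex.d_comp_d, zero_comp])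
    ⟨f''.choose, f''.choose_spec⟩

lemma lift_f_zero_comp_π : preadditiveYoneda.map ((lift P R).f 0) ≫ R.π = P.π :=
  (exists_preadditiveYoneda_map_comp_eq R.π P.π).choose_spec

variable {P R}

def liftHomotopyZero {K : ChainComplex 𝒟 ℕ} (e : K ⟶ R.complex)
    (he : preadditiveYoneda.map (e.f 0) ≫ R.π = 0) : Homotopy e 0 :=
  have h₀ := R.exists_lift_of_π (e.f 0) he
  have h₁ := R.exists_lift_of_d 0 (e.f 1 - K.d 1 0 ≫ h₀.choose) (by
    rw [Preadditive.sub_comp, Category.assoc, h₀.choose_spec, e.comm, sub_self])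
  Homotopy.mkInductive e h₀.choose h₀.choose_spec.symm h₁.choose
    (by rw [h₁.choose_spec]; abel) fun n ⟨f, f', hf⟩ =>
    have h := R.exists_lift_of_d (n + 1) (e.f (n + 2) - K.d (n + 2) (n + 1) ≫ f') (by
      rw [Preadditive.sub_comp, Category.assoc, e.comm, hf, Preadditive.comp_add,
        ← Category.assoc, HomologicalComplex.d_comp_d, zero_comp, zero_add, sub_self])
    ⟨h.choose, by rw [h.choose_spec]; abel⟩

def liftHomotopy {K : ChainComplex 𝒟 ℕ} (e e' : K ⟶ R.complex)
    (h : preadditiveYoneda.map (e.f 0) ≫ R.π = preadditiveYoneda.map (e'.f 0) ≫ R.π) :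
    Homotopy e e' :=
  Homotopy.equivSubZero.symm <| liftHomotopyZero (e - e') <| by
    rw [HomologicalComplex.sub_f_apply, Functor.map_sub, Preadditive.sub_comp, h, sub_self]

variable (P R)

lemma lift_comp_lift_f_zero_comp_π :
    preadditiveYoneda.map ((lift P R ≫ lift R P).f 0) ≫ P.π =
      preadditiveYoneda.map ((𝟙 P.complex : P.complex ⟶ P.complex).f 0) ≫ P.π := by
  rw [HomologicalComplex.comp_f, Functor.map_comp, Category.assoc, lift_f_zero_comp_π,
    lift_f_zero_comp_π, HomologicalComplex.id_f, CategoryTheory.Functor.map_id, Category.id_comp]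

def homotopyEquiv : HomotopyEquiv P.complex R.complex where
  hom := lift P R
  inv := lift R P
  homotopyHomInvId := liftHomotopy _ _ (lift_comp_lift_f_zero_comp_π P R)
  homotopyInvHomId := liftHomotopy _ _ (lift_comp_lift_f_zero_comp_π R P)

def homologyIso {𝒞 : Type*} [Category 𝒞] [Abelian 𝒞] (F : 𝒟ᵒᵖ ⥤ 𝒞) [F.Additive] (n : ℕ) :
    ((F.mapHomologicalComplex _).obj P.complex.op).homology n ≅
      ((F.mapHomologicalComplex _).obj R.complex.op).homology n :=
  (F.mapHomotopyEquiv (R.homotopyEquiv P).op).toHomologyIso n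

def ofKernelHomologyIso {Z A' A A'' : 𝒟} (hZ : IsZero Z) (α' : A' ⟶ A) (α : A ⟶ A'')
    [Mono α'] (w : α' ≫ α = 0) (hα' : ∀ {Y : 𝒟} (f : Y ⟶ A), f ≫ α = 0 → ∃ g, g ≫ α' = f)
    (π : preadditiveYoneda.obj A'' ⟶ G) [Epi π] (hπ : ExactAt (preadditiveYoneda.map α) π)
    (F : 𝒟ᵒᵖ ⥤ AddCommGrpCat.{v}) [F.PreservesZeroMorphisms] :
    ((F.mapHomologicalComplex _).obj (ofKernel hZ α' α w hα' π hπ).complex.op).homology 2 ≅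
      AddCommGrpCat.of (F.obj (op A') ⧸ (F.map α'.op).hom.range) :=
  ChainComplex.opMapHomologyIso F _ _ (fun | 0 => w | 1 => zero_comp | _ + 2 => zero_comp) 1 ≪≫
    ShortComplex.abHomologyIsoQuotientOfIsZero _ (F.map_isZero hZ.op)

end YonedaResolution

end YonedaResolution

theorem ext_two_iso_coker
    {ℳ : Type u₁} [Category.{v₁} ℳ] [Abelian ℳ] (P : ℳ → Prop)
    -- `𝒜` is an additive subcategory closed under direct summands:
    (h0 : ∃ Z : ℳ, P Z ∧ IsZero Z)
    -- an exact sequence `0 → A′ → A → A″` in `ℳ` with terms in `𝒜`: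
    (A' A A'' : ObjectProperty.FullSubcategory P) (α' : A' ⟶ A) (α : A ⟶ A'')
    (hmono : Mono ((ObjectProperty.ι P).map α'))
    (hexact : ExactAt ((ObjectProperty.ι P).map α') ((ObjectProperty.ι P).map α))
    -- `G` is the finitely presented right `𝒜`-module defined by
    -- `𝒜(−, A) → 𝒜(−, A″) → G → 0`:
    (G : RightMod (ObjectProperty.FullSubcategory P)) (ε : preadditiveYoneda.obj A'' ⟶ G)
    (hε : Epi ε) (hexactG : ExactAt (preadditiveYoneda.map α) ε)
    (H : RightMod (ObjectProperty.FullSubcategory P)) [hHadd : H.Additive] :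
    -- then, computing `Ext²(G, H)` via any projective resolution of `G` by representables:
    ∀ (Q : ℕ → ObjectProperty.FullSubcategory P) (q : ∀ i, Q (i + 1) ⟶ Q i)
      (ε' : preadditiveYoneda.obj (Q 0) ⟶ G),
      Epi ε' → ExactAt (preadditiveYoneda.map (q 0)) ε' →
      (∀ i, ExactAt (preadditiveYoneda.map (q (i + 1))) (preadditiveYoneda.map (q i))) →
      (hq : ∀ i, q (i + 1) ≫ q i = 0) →
      Nonempty
        (((CochainComplex.of (fun i => H.obj (op (Q i))) (fun i => H.map (q i).op)
            (fun i => by rw [← H.map_comp, ← op_comp, hq i, op_zero]; exact H.mapAddHom.map_zero)).homology 2)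
          ≅ AddCommGrpCat.of (↥(H.obj (op A')) ⧸ (H.map α'.op).hom.range)) := by
  intro Q q ε' _ hQ₀ hQ hq
  obtain ⟨Z, hZP, hZ⟩ := h0
  have hZ' : IsZero (⟨Z, hZP⟩ : ObjectProperty.FullSubcategory P) :=
    IsZero.of_full_of_faithful_of_isZero (ObjectProperty.ι P) _ hZ
  have : Mono α' := (ObjectProperty.ι P).mono_of_mono_map hmono
  have w : α' ≫ α = 0 := (ObjectProperty.ι P).map_injective (by simpa using hexact.1)
  have hα' {Y} (f : Y ⟶ A) (hf : f ≫ α = 0) : ∃ g, g ≫ α' = f :=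
    (ObjectProperty.ι P).exists_comp_eq_of_exactAt_map hexact f hf
  exact ⟨CochainComplex.ofHomologyIso _ _ _ 1 ≪≫ (ChainComplex.opMapHomologyIso H Q q hq 1).symm ≪≫
    (YonedaResolution.ofExactAt Q q hq ε' hQ₀ hQ).homologyIso
      (.ofKernel hZ' α' α w hα' ε hexactG) H 2 ≪≫
    YonedaResolution.ofKernelHomologyIso hZ' α' α w hα' ε hexactG H⟩
end
end

section
/- Assume R has finite CM-type and let X be a representation generator of MCM with Auslander algebra E = End_R(X). If gl.dim E ≤ 1, then R is a regular local ring. -/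
/-!
Statement 15: Let `(R, 𝔪, k)` be a commutative noetherian local Cohen–Macaulay ring of Krull
dimension `d` admitting a dualizing module `Ω`.  Assume `R` has finite CM-type and let `X`
be a representation generator of `MCM`, with Auslander algebra `E = End_R(X)`.  If
`gl.dim E ≤ 1`, then `R` is a regular local ring (i.e. its maximal ideal can be generated by
`d = dim R` elements).
-/

open CategoryTheory CategoryTheory.Limits Opposite

noncomputable section

/-- The depth of a module over a local ring, as an element of `ℕ∞`:
the supremum of the lengths of `M`-regular sequences with entries in the maximal ideal.
By convention the zero module has depth `+∞`. -/
noncomputable def moduleDepth (R : Type*) [CommRing R] [IsLocalRing R]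
    (M : Type*) [AddCommGroup M] [Module R M] : ℕ∞ :=
  letI : Decidable (Subsingleton M) := Classical.propDecidable _
  if Subsingleton M then ⊤
  else sSup {n : ℕ∞ | ∃ rs : List R, (∀ r ∈ rs, r ∈ IsLocalRing.maximalIdeal R) ∧
    RingTheory.Sequence.IsRegular M rs ∧ (rs.length : ℕ∞) = n}

/-- A finitely generated module `M` over a local ring of Krull dimension `d` is maximal
Cohen–Macaulay if `depth M ≥ d` (in particular, the zero module is maximal Cohen–Macaulay). -/
def IsMCM (R : Type*) [CommRing R] [IsLocalRing R] (d : ℕ)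
    (M : Type*) [AddCommGroup M] [Module R M] : Prop :=
  Module.Finite R M ∧ (d : ℕ∞) ≤ moduleDepth R M

/-- `Ext^i_R(M, N)` for `R`-modules, via the derived functor `Ext` of `Mathlib`. -/
noncomputable def moduleExt (R : Type u) [CommRing R] (i : ℕ)
    (M N : ModuleCat.{u} R) : ModuleCat.{u} R :=
  ((_root_.Ext R (ModuleCat.{u} R) i).obj (Opposite.op M)).obj N

/-- `Ω` is a dualizing (canonical) module for the `d`-dimensional Cohen–Macaulay local ring
`R` if it is finitely generated, `Ext^i_R(k, Ω) = 0` for `i ≠ d`, and `Ext^d_R(k, Ω) ≅ k`. -/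
def IsDualizingModule (R : Type u) [CommRing R] [IsLocalRing R] (d : ℕ)
    (Ω : Type u) [AddCommGroup Ω] [Module R Ω] : Prop :=
  Module.Finite R Ω ∧
    (∀ i : ℕ, i ≠ d → Subsingleton
      (moduleExt R i (ModuleCat.of R (IsLocalRing.ResidueField R)) (ModuleCat.of R Ω))) ∧
    Nonempty (moduleExt R d (ModuleCat.of R (IsLocalRing.ResidueField R)) (ModuleCat.of R Ω)
      ≅ ModuleCat.of R (IsLocalRing.ResidueField R))


variable (𝒞 : Type u₁) [Category.{v₁} 𝒞] [Preadditive 𝒞]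

/-- An `R`-module is indecomposable if it is nonzero and its only idempotent endomorphisms
are `0` and the identity. -/
def IsIndecomposable (R : Type u) [CommRing R]
    (M : Type v) [AddCommGroup M] [Module R M] : Prop :=
  Nontrivial M ∧ ∀ e : M →ₗ[R] M, e.comp e = e → e = 0 ∨ e = LinearMap.id

/-!
`R` is an indecomposable maximal Cohen–Macaulay module, hence a direct summand of `X`, so `X` is
a projective module over `E = End_R(X)`. As `gl.dim E ≤ 1`, the kernel `𝔪X` of `X → X/𝔪X` is
`E`-projective, so for generators `a₁, …, aₙ` of `𝔪` the surjection `Xⁿ → 𝔪X`, `x ↦ ∑ aᵢxᵢ`,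
splits `E`-linearly, in particular `R`-linearly. Cutting this splitting down to the summand `R`
of `X` splits `Rⁿ → 𝔪`, so `𝔪` is projective, hence free. A free ideal has rank at most one, and
a basis vector of `𝔪` is a nonzerodivisor in `𝔪`, which forces `dim R ≥ 1`.
-/

open IsLocalRing

theorem IsLocalRing.isIndecomposable_self (R : Type u) [CommRing R] [IsLocalRing R] :
    IsIndecomposable R R := by
  refine ⟨inferInstance, fun e he => ?_⟩
  have hidem : IsIdempotentElem (e 1) := by
    calc e 1 * e 1 = e (e 1 • 1) := by rw [map_smul, smul_eq_mul]
      _ = e 1 := by rw [smul_eq_mul, mul_one]; exact LinearMap.congr_fun he 1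
  rcases isUnit_or_isUnit_one_sub_self (e 1) with hu | hu
  · exact .inr <| LinearMap.ext_ring <| (IsIdempotentElem.iff_eq_one_of_isUnit hu).mp hidem
  · refine .inl <| LinearMap.ext_ring ?_
    simpa [sub_eq_self] using (IsIdempotentElem.iff_eq_one_of_isUnit hu).mp hidem.one_sub

section ProjectiveDimension

variable {A : Type u} [Ring A]

theorem ModulePdLE.mono {M : ModuleCat.{u} A} {m n : ℕ} (h : ModulePdLE A M m) (hmn : m ≤ n) :
    ModulePdLE A M n := by
  obtain ⟨P, g, ε, hP, hε, h₀, hexact, hvanish⟩ := h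
  exact ⟨P, g, ε, hP, hε, h₀, hexact, fun i hi => hvanish i (hmn.trans_lt hi)⟩

theorem modulePdLE_of_ringGlobalDim_le {n : ℕ} (h : ringGlobalDim A ≤ n) (M : ModuleCat.{u} A) :
    ModulePdLE A M n := by
  set S := {c : ℕ∞ | ∃ m : ℕ, c = (m : ℕ∞) ∧ ∀ M : ModuleCat.{u} A, ModulePdLE A M m}
  have hS : sInf S ≤ n := h
  have hne : S.Nonempty := by
    by_contra hempty
    rw [Set.not_nonempty_iff_eq_empty.mp hempty, sInf_empty] at hS
    exact ENat.top_ne_natCast n (top_le_iff.mp hS).symm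
  obtain ⟨m, hm, hall⟩ := csInf_mem hne
  exact (hall M).mono (by exact_mod_cast hm ▸ hS)

/-- Schanuel: with lifts `α : P → Q` and `β : Q → P` of the two surjections, `ker p` is a
retract of `P × ker q` via `u ↦ (u, α u)` and `(x, k) ↦ x - β (α x) + β k`. -/
theorem Module.Projective.ker_of_projective_ker {M P Q : Type*} [AddCommGroup M] [AddCommGroup P]
    [AddCommGroup Q] [Module A M] [Module A P] [Module A Q] [Module.Projective A P]
    [Module.Projective A Q] {p : P →ₗ[A] M} {q : Q →ₗ[A] M} (hp : Function.Surjective p)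
    (hq : Function.Surjective q) [Module.Projective A (LinearMap.ker q)] :
    Module.Projective A (LinearMap.ker p) := by
  obtain ⟨α, hα⟩ := Module.projective_lifting_property q p hq
  obtain ⟨β, hβ⟩ := Module.projective_lifting_property p q hp
  have hα' (x : P) : q (α x) = p x := LinearMap.congr_fun hα x
  have hβ' (y : Q) : p (β y) = q y := LinearMap.congr_fun hβ y
  let i : LinearMap.ker p →ₗ[A] P × LinearMap.ker q :=
    (LinearMap.ker p).subtype.prod <| (α ∘ₗ (LinearMap.ker p).subtype).codRestrict _ fun u => by
      simp [hα']
  let s : P × LinearMap.ker q →ₗ[A] LinearMap.ker p :=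
    LinearMap.codRestrict _ ((LinearMap.id - β ∘ₗ α) ∘ₗ LinearMap.fst A P _ +
      β ∘ₗ (LinearMap.ker q).subtype ∘ₗ LinearMap.snd A P _) fun ⟨x, k⟩ => by
        simp [hα', hβ']
  refine .of_split i s (LinearMap.ext fun u => Subtype.ext ?_)
  exact sub_add_cancel (u : P) (β (α u))

theorem ModulePdLE.projective_ker {M : ModuleCat.{u} A} (hM : ModulePdLE A M 1) {P : Type*}
    [AddCommGroup P] [Module A P] [Module.Projective A P] {p : P →ₗ[A] M}
    (hp : Function.Surjective p) : Module.Projective A (LinearMap.ker p) := by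
  obtain ⟨Q, g, ε, hQ, hε, ⟨_, hexact₀⟩, hexact, hvanish⟩ := hM
  obtain ⟨_, hexact₁⟩ := hexact 0
  have : Subsingleton (Q 2) := hvanish 2 (by norm_num)
  have hg₀ : Function.Injective (g 0).hom := by
    rw [← LinearMap.ker_eq_bot, ← (ShortComplex.moduleCat_exact_iff_range_eq_ker _).mp hexact₁,
      LinearMap.range_eq_bot]
    exact Subsingleton.elim _ _
  have hrange : LinearMap.range (g 0).hom = LinearMap.ker ε.hom :=
    (ShortComplex.moduleCat_exact_iff_range_eq_ker _).mp hexact₀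
  have := hQ 0
  have := hQ 1
  have : Module.Projective A (LinearMap.ker ε.hom) :=
    .of_equiv ((LinearEquiv.ofInjective _ hg₀).trans (LinearEquiv.ofEq _ _ hrange))
  exact .ker_of_projective_ker hp ((ModuleCat.epi_iff_surjective ε).mp hε)

end ProjectiveDimension

section AuslanderAlgebra

variable {R X : Type*} [CommRing R] [AddCommGroup X] [Module R X]

theorem Module.End.projective_of_retract (x₀ : X) (r : X →ₗ[R] R) (h : r x₀ = 1) :
    Module.Projective (Module.End R X) X := by
  let i : X →ₗ[Module.End R X] Module.End R X :=
    { toFun := fun x => r.smulRight x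
      map_add' := fun x y => by ext; simp
      map_smul' := fun f x => by ext; simp }
  refine .of_split i (LinearMap.toSpanSingleton _ _ x₀) (LinearMap.ext fun x => ?_)
  simp [i, h]

variable {ι : Type*} [Fintype ι]

def Module.End.weightedSum (a : ι → R) : (ι → X) →ₗ[Module.End R X] X :=
  ∑ i, a i • LinearMap.proj i

@[simp]
theorem Module.End.weightedSum_apply (a : ι → R) (v : ι → X) :
    weightedSum a v = ∑ i, a i • v i := by
  simp [weightedSum]

theorem Module.End.smul_mem_range_weightedSum (a : ι → R) (x : X) {t : R}
    (ht : t ∈ Ideal.span (Set.range a)) : t • x ∈ LinearMap.range (weightedSum a) := by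
  obtain ⟨c, rfl⟩ := (Submodule.mem_span_range_iff_exists_fun R).mp ht
  refine ⟨fun i => c i • x, ?_⟩
  simp [Finset.sum_smul, smul_smul, mul_comm]

theorem Module.End.projective_span_of_projective_range (x₀ : X) (r : X →ₗ[R] R) (h : r x₀ = 1)
    (a : ι → R) [Module.Projective (Module.End R X) (LinearMap.range (weightedSum (X := X) a))] :
    Module.Projective R (Ideal.span (Set.range a)) := by
  obtain ⟨s, hs⟩ := Module.projective_lifting_property (weightedSum (X := X) a).rangeRestrict
    LinearMap.id (LinearMap.surjective_rangeRestrict _)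
  let σ : Ideal.span (Set.range a) →ₗ[R] ι → X :=
    s.restrictScalars R ∘ₗ
      LinearMap.codRestrict ((LinearMap.range (weightedSum a)).restrictScalars R)
        (LinearMap.toSpanSingleton R X x₀ ∘ₗ (Ideal.span (Set.range a)).subtype)
        fun t => smul_mem_range_weightedSum a x₀ t.2
  let π : (ι → R) →ₗ[R] Ideal.span (Set.range a) :=
    LinearMap.codRestrict _ (Fintype.linearCombination R a) fun v =>
      (Submodule.mem_span_range_iff_exists_fun R).mpr ⟨v, rfl⟩
  refine .of_split (LinearMap.compLeft r ι ∘ₗ σ) π (LinearMap.ext fun t => Subtype.ext ?_)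
  set u : LinearMap.range (weightedSum (X := X) a) :=
    ⟨(t : R) • x₀, smul_mem_range_weightedSum a x₀ t.2⟩
  have hsplit : weightedSum a (s u) = (t : R) • x₀ :=
    congr_arg Subtype.val (LinearMap.congr_fun hs u)
  change ∑ i, r (s u i) • a i = t
  calc ∑ i, r (s u i) • a i = r (weightedSum a (s u)) := by simp [mul_comm]
    _ = t := by rw [hsplit, map_smul, h, smul_eq_mul, mul_one]

end AuslanderAlgebra

section FreeMaximalIdeal

variable {R : Type*} [CommRing R]

theorem Ideal.subsingleton_of_basis [Nontrivial R] {I : Ideal R} {κ : Type*}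
    (b : Module.Basis κ R I) : Subsingleton κ := by
  classical
  refine ⟨fun i j => by_contra fun hij => b.ne_zero j ?_⟩
  have hcomm : (b j : R) • b i = (b i : R) • b j := Subtype.ext (mul_comm _ _)
  have := congr_arg b.repr hcomm
  simp only [map_smul, b.repr_self, Finsupp.smul_single_one, Finsupp.single_eq_single_iff, hij,
    false_and, false_or] at this
  exact Subtype.ext this.1

variable [IsLocalRing R]

theorem one_le_ringKrullDim_of_mem_nonZeroDivisors {t : R} (ht : t ∈ nonZeroDivisors R)
    (htm : t ∈ maximalIdeal R) : 1 ≤ ringKrullDim R := by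
  have : Nontrivial (R ⧸ Ideal.span {t}) :=
    Ideal.Quotient.nontrivial_iff.mpr (Ideal.span_singleton_ne_top htm)
  calc 1 = 0 + 1 := (zero_add 1).symm
    _ ≤ ringKrullDim (R ⧸ Ideal.span {t}) + 1 := by
      gcongr; exact ringKrullDim_nonneg_of_nontrivial
    _ ≤ ringKrullDim R := ringKrullDim_quotient_succ_le_of_nonZeroDivisor ht

theorem card_le_ringKrullDim_of_basis_maximalIdeal {κ : Type*} [Fintype κ]
    (b : Module.Basis κ R (maximalIdeal R)) : (Fintype.card κ : WithBot ℕ∞) ≤ ringKrullDim R := by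
  have := Ideal.subsingleton_of_basis b
  rcases isEmpty_or_nonempty κ with hκ | ⟨⟨i⟩⟩
  · simpa using ringKrullDim_nonneg_of_nontrivial
  · have hreg : (b i : R) ∈ nonZeroDivisors R := by
      refine mem_nonZeroDivisors_iff_right.mpr fun c hc => ?_
      have : c • b i = 0 := Subtype.ext hc
      simpa using congr_arg b.repr this
    have : Unique κ := uniqueOfSubsingleton i
    simpa [Fintype.card_unique] using one_le_ringKrullDim_of_mem_nonZeroDivisors hreg (b i).2

theorem exists_finset_card_le_of_projective_maximalIdeal [IsNoetherianRing R]
    [Module.Projective R (maximalIdeal R)] {d : ℕ} (hdim : ringKrullDim R = d) :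
    ∃ s : Finset R, s.card ≤ d ∧ Ideal.span (s : Set R) = maximalIdeal R := by
  classical
  have : Module.Free R (maximalIdeal R) := Module.free_of_flat_of_isLocalRing
  let b := Module.Free.chooseBasis R (maximalIdeal R)
  refine ⟨Finset.univ.image fun i => (b i : R), ?_, ?_⟩
  · have := card_le_ringKrullDim_of_basis_maximalIdeal b
    rw [hdim] at this
    exact Finset.card_image_le.trans (by exact_mod_cast this)
  · rw [Finset.coe_image, Finset.coe_univ, Set.image_univ, Set.range_comp' Subtype.val b,
      Ideal.span, ← (maximalIdeal R).coe_subtype, Submodule.span_image, b.span_eq,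
      Submodule.map_subtype_top]

end FreeMaximalIdeal

theorem regular_of_gldim_auslander_algebra_le_one_general
    (R : Type u) [CommRing R] [IsLocalRing R] [IsNoetherianRing R]
    (d : ℕ) (hdim : ringKrullDim R = d)
    (hCM : moduleDepth R R = (d : ℕ∞))
    (X : ModuleCat.{u} R)
    -- `X` is a representation generator of `MCM`: every indecomposable maximal
    -- Cohen–Macaulay module is a direct summand of `X`:
    (hrep : ∀ (M : Type u) [AddCommGroup M] [Module R M],
      IsMCM R d M → IsIndecomposable R M →
        ∃ (ι : M →ₗ[R] X) (ρ : X →ₗ[R] M), ρ.comp ι = LinearMap.id)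
    (hgl : ringGlobalDim (Module.End R X) ≤ 1) :
    ∃ s : Finset R, s.card ≤ d ∧ Ideal.span (s : Set R) = IsLocalRing.maximalIdeal R := by
  obtain ⟨ι, ρ, hρι⟩ := hrep R ⟨inferInstance, hCM.ge⟩ (isIndecomposable_self R)
  have hρ : ρ (ι 1) = 1 := LinearMap.congr_fun hρι 1
  have := Module.End.projective_of_retract (ι 1) ρ hρ
  obtain ⟨n, a, ha⟩ := Submodule.fg_iff_exists_fin_generating_family.mp
    (IsNoetherian.noetherian (maximalIdeal R))
  let U := LinearMap.range (Module.End.weightedSum (X := X) a)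
  have : Module.Projective (Module.End R X) U := by
    have hpd := modulePdLE_of_ringGlobalDim_le (n := 1) (by exact_mod_cast hgl)
      (ModuleCat.of (Module.End R X) (X ⧸ U))
    exact U.ker_mkQ ▸ hpd.projective_ker U.mkQ_surjective
  have : Module.Projective R (maximalIdeal R) :=
    ha ▸ Module.End.projective_span_of_projective_range (ι 1) ρ hρ a
  exact exists_finset_card_le_of_projective_maximalIdeal hdim

theorem regular_of_gldim_auslander_algebra_le_one
    (R : Type u) [CommRing R] [IsLocalRing R] [IsNoetherianRing R]
    (d : ℕ) (hdim : ringKrullDim R = d)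
    (hCM : moduleDepth R R = (d : ℕ∞))
    (Ω : Type u) [AddCommGroup Ω] [Module R Ω] (hΩ : IsDualizingModule R d Ω)
    (X : ModuleCat.{u} R) (hX : IsMCM R d X)
    -- `R` has finite CM-type:
    (hfin : ∃ (n : ℕ) (res : Fin n → ModuleCat.{u} R),
      ∀ M : ModuleCat.{u} R, IsMCM R d M → IsIndecomposable R M → ∃ i, Nonempty (M ≅ res i))
    -- `X` is a representation generator of `MCM`: every indecomposable maximal
    -- Cohen–Macaulay module is a direct summand of `X`:
    (hrep : ∀ (M : Type u) [AddCommGroup M] [Module R M],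
      IsMCM R d M → IsIndecomposable R M →
        ∃ (ι : M →ₗ[R] X) (ρ : X →ₗ[R] M), ρ.comp ι = LinearMap.id)
    (hgl : ringGlobalDim (Module.End R X) ≤ 1) :
    ∃ s : Finset R, s.card ≤ d ∧ Ideal.span (s : Set R) = IsLocalRing.maximalIdeal R :=
  regular_of_gldim_auslander_algebra_le_one_general R d hdim hCM X hrep hgl
end
end
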